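/- arXiv:2011.03866 — 9 statements merged into one kernel-verified Lean document; each statement's English description precedes it below -/
import Mathlib

section
/- Along any solution of the Chaplygin ball system, the energy F₂(t) = ½⟨G(t), ω(t)⟩ is constant in t, for every value of ε. -/
open Matrix

lemma hasDerivAt_dotP {f g : ℝ → Fin 3 → ℝ} {f' g' : Fin 3 → ℝ} {t : ℝ}
    (hf : HasDerivAt f f' t) (hg : HasDerivAt g g' t) :
    HasDerivAt (fun s => f s ⬝ᵥ g s) (f' ⬝ᵥ g t + f t ⬝ᵥ g') t := by
  have h1 := hasDerivAt_pi.mp hf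
  have h2 := hasDerivAt_pi.mp hg
  have h : HasDerivAt (fun s => ∑ i, f s i * g s i)
      (∑ i, (f' i * g t i + f t i * g' i)) t :=
    HasDerivAt.fun_sum fun i _ => (h1 i).mul (h2 i)
  simpa [dotProduct, Finset.sum_add_distrib] using h

lemma hasDerivAt_mulVecP (A : Matrix (Fin 3) (Fin 3) ℝ) {f : ℝ → Fin 3 → ℝ}
    {f' : Fin 3 → ℝ} {t : ℝ} (hf : HasDerivAt f f' t) :
    HasDerivAt (fun s => A *ᵥ f s) (A *ᵥ f') t := by
  rw [hasDerivAt_pi]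
  intro i
  have h1 := hasDerivAt_pi.mp hf
  have h : HasDerivAt (fun s => ∑ j, A i j * f s j) (∑ j, A i j * f' j) t :=
    HasDerivAt.fun_sum fun j _ => (h1 j).const_mul _
  simpa [Matrix.mulVec, dotProduct] using h

/-- Along any solution of the Chaplygin ball system, the energy `F₂ = ½⟨G, ω⟩`
is constant, for every value of `ε`. -/
theorem chaplygin_ball_energy_constant
    (I₁ I₂ I₃ D ε : ℝ) (hI₁ : 0 < I₁) (hI₂ : 0 < I₂) (hI₃ : 0 < I₃) (hD : 0 < D)
    (ω γ : ℝ → Fin 3 → ℝ) (hω : Differentiable ℝ ω) (hγ : Differentiable ℝ γ)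
    (G : ℝ → Fin 3 → ℝ)
    (hG : ∀ t, G t =
      (Matrix.diagonal ![I₁, I₂, I₃] + D • (1 : Matrix (Fin 3) (Fin 3) ℝ)) *ᵥ ω t
        - (D * (ω t ⬝ᵥ γ t)) • γ t)
    (heqG : ∀ t, HasDerivAt G (crossProduct (G t) (ω t)) t)
    (heqγ : ∀ t, HasDerivAt γ (ε • (crossProduct (γ t) (ω t))) t) :
    ∀ t₁ t₂ : ℝ, (1 / 2) * (G t₁ ⬝ᵥ ω t₁) = (1 / 2) * (G t₂ ⬝ᵥ ω t₂) := by
  set A := (Matrix.diagonal ![I₁, I₂, I₃] + D • (1 : Matrix (Fin 3) (Fin 3) ℝ)) with hA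
  have hsym : ∀ x y : Fin 3 → ℝ, x ⬝ᵥ (A *ᵥ y) = y ⬝ᵥ (A *ᵥ x) := by
    intro x y
    simp [hA, Matrix.mulVec, dotProduct, Fin.sum_univ_three,
      Matrix.add_apply, Matrix.smul_apply, Matrix.diagonal_apply, Matrix.one_apply]
    ring
  have key : ∀ t, HasDerivAt (fun s => G s ⬝ᵥ ω s) 0 t := by
    intro t
    have hω' := (hω t).hasDerivAt
    have d1 : HasDerivAt (fun s => G s ⬝ᵥ ω s)
        ((crossProduct (G t) (ω t)) ⬝ᵥ ω t + G t ⬝ᵥ deriv ω t) t :=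
      hasDerivAt_dotP (heqG t) hω'
    have funeq : (fun s => G s ⬝ᵥ ω s)
        = fun s => ω s ⬝ᵥ (A *ᵥ ω s) - D * (ω s ⬝ᵥ γ s) ^ 2 := by
      funext s
      rw [hG s, sub_dotProduct, smul_dotProduct,
        dotProduct_comm (A *ᵥ ω s), dotProduct_comm (γ s) (ω s), smul_eq_mul]
      ring
    have hd := hasDerivAt_dotP hω' (heqγ t)
    have hsq := hd.pow 2
    have d2' := (hasDerivAt_dotP hω' (hasDerivAt_mulVecP A hω')).sub (hsq.const_mul D)
    have d2 : HasDerivAt (fun s => G s ⬝ᵥ ω s)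
        ((deriv ω t ⬝ᵥ (A *ᵥ ω t) + ω t ⬝ᵥ (A *ᵥ deriv ω t))
          - D * (↑2 * (ω t ⬝ᵥ γ t) ^ (2 - 1) * (deriv ω t ⬝ᵥ γ t + ω t ⬝ᵥ (ε • (crossProduct (γ t) (ω t)))))) t := by
      rw [funeq]; exact d2'
    have huniq := d1.unique d2
    -- orthogonality facts
    have o1 : (crossProduct (G t) (ω t)) ⬝ᵥ ω t = 0 := by
      rw [dotProduct_comm]; exact dot_cross_self _ _
    have o2 : ω t ⬝ᵥ (ε • (crossProduct (γ t) (ω t))) = 0 := by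
      rw [dotProduct_smul, dot_cross_self]; simp
    have hGdot : G t ⬝ᵥ deriv ω t
        = deriv ω t ⬝ᵥ (A *ᵥ ω t) - D * (ω t ⬝ᵥ γ t) * (deriv ω t ⬝ᵥ γ t) := by
      rw [hG t, sub_dotProduct, smul_dotProduct,
        dotProduct_comm (A *ᵥ ω t), dotProduct_comm (γ t) (deriv ω t), smul_eq_mul]
    rw [o1, o2, hGdot, hsym (ω t) (deriv ω t)] at huniq
    have hz : deriv ω t ⬝ᵥ (A *ᵥ ω t) - D * (ω t ⬝ᵥ γ t) * (deriv ω t ⬝ᵥ γ t) = 0 := by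
      push_cast at huniq
      nlinarith [huniq]
    have : (crossProduct (G t) (ω t)) ⬝ᵥ ω t + G t ⬝ᵥ deriv ω t = 0 := by
      rw [o1, hGdot, hz]; ring
    rw [this] at d1; exact d1
  have hdiff : Differentiable ℝ (fun s => G s ⬝ᵥ ω s) := fun t => (key t).differentiableAt
  intro t₁ t₂
  have hc := is_const_of_deriv_eq_zero hdiff (fun x => (key x).deriv) t₁ t₂
  rw [hc]
end

section
/- If ε = −1 (the Borisov–Fedorov case, rolling of a spherical shell over a fixed sphere with R₂ = 2R₁), then along any solution of the Chaplygin ball system the function F̃₄(t) = (I₂ + I₃ − I₁ + D)·G₁(t)γ₁(t) + (I₃ + I₁ − I₂ + D)·G₂(t)γ₂(t) + (I₁ + I₂ − I₃ + D)·G₃(t)γ₃(t) is constant in t, where G = (G₁, G₂, G₃) and γ = (γ₁, γ₂, γ₃). -/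
/-!
The weights of `F̃₄` are the diagonal of `A = (tr 𝐈)·1 − 2𝐈`,
so `F̃₄ = ⟨G, Aγ⟩`. For `ε = −1` its derivative is `⟨G × ω, Aγ⟩ − ⟨G, A(γ × ω)⟩`; for
`G = 𝐈ω − sγ` the `s`-terms cancel by antisymmetry of the triple product, and what remains
vanishes by the identity `[Mu, v, w] + [u, Mv, w] + [u, v, Mw] = tr M · [u, v, w]` for
`M = 𝐈`, `u = 𝐈ω`, `v = ω`, `w = γ` (where `[𝐈ω, 𝐈ω, γ] = 0`).
-/

open Matrix

theorem HasDerivAt.dotProduct {n : Type*} [Fintype n] {f g : ℝ → n → ℝ} {f' g' : n → ℝ}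
    {t : ℝ} (hf : HasDerivAt f f' t) (hg : HasDerivAt g g' t) :
    HasDerivAt (fun s => f s ⬝ᵥ g s) (f' ⬝ᵥ g t + f t ⬝ᵥ g') t := by
  have h := HasDerivAt.fun_sum (u := Finset.univ) fun i _ =>
    (hasDerivAt_pi.mp hf i).mul (hasDerivAt_pi.mp hg i)
  rw [Finset.sum_add_distrib] at h
  exact h

theorem HasDerivAt.const_mulVec {m n : Type*} [Fintype m] [Fintype n] [DecidableEq n]
    (A : Matrix m n ℝ) {g : ℝ → n → ℝ} {g' : n → ℝ} {t : ℝ} (hg : HasDerivAt g g' t) :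
    HasDerivAt (fun s => A *ᵥ g s) (A *ᵥ g') t :=
  (LinearMap.toContinuousLinearMap (mulVecLin A)).hasFDerivAt.comp_hasDerivAt t hg

theorem cross_dotProduct_trace_sub_two_mulVec_eq {R : Type*} [CommRing R] (J : Matrix (Fin 3) (Fin 3) R)
    (hJ : J.IsSymm) (ω γ : Fin 3 → R) (s : R) :
    ((J *ᵥ ω - s • γ) ⨯₃ ω) ⬝ᵥ ((J.trace • 1 - 2 • J) *ᵥ γ)
      = (J *ᵥ ω - s • γ) ⬝ᵥ ((J.trace • 1 - 2 • J) *ᵥ (γ ⨯₃ ω)) := by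
  have h10 : J 1 0 = J 0 1 := hJ.apply 0 1
  have h20 : J 2 0 = J 0 2 := hJ.apply 0 2
  have h21 : J 2 1 = J 1 2 := hJ.apply 1 2
  simp only [sub_mulVec, smul_mulVec, one_mulVec, two_smul, add_mulVec]
  simp only [cross_apply, mulVec, dotProduct, Fin.sum_univ_three, trace, diag,
    Pi.sub_apply, Pi.add_apply, Pi.smul_apply, smul_eq_mul, cons_val_zero, cons_val_one,
    cons_val_two, head_cons, tail_cons, h10, h20, h21]
  ring

theorem hasDerivAt_dotProduct_trace_sub_two_mulVec
    (J : Matrix (Fin 3) (Fin 3) ℝ) (hJ : J.IsSymm) (ω γ G : ℝ → Fin 3 → ℝ) (s : ℝ → ℝ)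
    (hG : ∀ t, G t = J *ᵥ ω t - s t • γ t) {t : ℝ} (heqG : HasDerivAt G (G t ⨯₃ ω t) t)
    (heqγ : HasDerivAt γ (-(γ t ⨯₃ ω t)) t) :
    HasDerivAt (fun t => G t ⬝ᵥ ((J.trace • 1 - 2 • J) *ᵥ γ t)) 0 t := by
  convert heqG.dotProduct (heqγ.const_mulVec _) using 1
  rw [mulVec_neg, dotProduct_neg, hG, cross_dotProduct_trace_sub_two_mulVec_eq J hJ, add_neg_cancel]

theorem chaplygin_ball_borisov_fedorov_integral_general
    (I₁ I₂ I₃ D ε : ℝ)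
    (hε : ε = -1)
    (ω γ : ℝ → Fin 3 → ℝ)
    (G : ℝ → Fin 3 → ℝ)
    (hG : ∀ t, G t =
      (Matrix.diagonal ![I₁, I₂, I₃] + D • (1 : Matrix (Fin 3) (Fin 3) ℝ)) *ᵥ ω t
        - (D * (ω t ⬝ᵥ γ t)) • γ t)
    (heqG : ∀ t, HasDerivAt G (G t ⨯₃ ω t) t)
    (heqγ : ∀ t, HasDerivAt γ (ε • (γ t ⨯₃ ω t)) t) :
    ∀ t₁ t₂ : ℝ,
      (I₂ + I₃ - I₁ + D) * G t₁ 0 * γ t₁ 0 + (I₃ + I₁ - I₂ + D) * G t₁ 1 * γ t₁ 1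
        + (I₁ + I₂ - I₃ + D) * G t₁ 2 * γ t₁ 2
      = (I₂ + I₃ - I₁ + D) * G t₂ 0 * γ t₂ 0 + (I₃ + I₁ - I₂ + D) * G t₂ 1 * γ t₂ 1
        + (I₁ + I₂ - I₃ + D) * G t₂ 2 * γ t₂ 2 := by
  subst hε
  set J := Matrix.diagonal ![I₁, I₂, I₃] + D • (1 : Matrix (Fin 3) (Fin 3) ℝ)
  have hJ : J.IsSymm := (isSymm_diagonal _).add (isSymm_one.smul D)
  have hF : ∀ t, (I₂ + I₃ - I₁ + D) * G t 0 * γ t 0 + (I₃ + I₁ - I₂ + D) * G t 1 * γ t 1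
      + (I₁ + I₂ - I₃ + D) * G t 2 * γ t 2 = G t ⬝ᵥ ((J.trace • 1 - 2 • J) *ᵥ γ t) := by
    intro t
    simp only [J, vec3_dotProduct, sub_mulVec, add_mulVec, smul_mulVec, one_mulVec, two_smul,
      trace_add, trace_diagonal, trace_smul, trace_one, Fintype.card_fin, Fin.sum_univ_three,
      Pi.sub_apply, Pi.add_apply, Pi.smul_apply, mulVec_diagonal, cons_val_zero, cons_val_one,
      cons_val_two, head_cons, tail_cons, smul_eq_mul]
    ring
  have hderiv t : HasDerivAt (fun t => G t ⬝ᵥ ((J.trace • 1 - 2 • J) *ᵥ γ t)) 0 t :=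
    hasDerivAt_dotProduct_trace_sub_two_mulVec J hJ ω γ G _ hG (heqG t)
      (by simpa only [neg_one_smul] using heqγ t)
  intro t₁ t₂
  rw [hF, hF]
  exact is_const_of_deriv_eq_zero (fun t => (hderiv t).differentiableAt)
    (fun t => (hderiv t).deriv) t₁ t₂

/-- If `ε = −1` (the Borisov–Fedorov case), then along any solution of the Chaplygin
ball system the function
`F̃₄ = (I₂+I₃−I₁+D)G₁γ₁ + (I₃+I₁−I₂+D)G₂γ₂ + (I₁+I₂−I₃+D)G₃γ₃` is constant. -/
theorem chaplygin_ball_borisov_fedorov_integral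
    (I₁ I₂ I₃ D ε : ℝ) (hI₁ : 0 < I₁) (hI₂ : 0 < I₂) (hI₃ : 0 < I₃) (hD : 0 < D)
    (hε : ε = -1)
    (ω γ : ℝ → Fin 3 → ℝ) (hω : Differentiable ℝ ω) (hγ : Differentiable ℝ γ)
    (G : ℝ → Fin 3 → ℝ)
    (hG : ∀ t, G t =
      (Matrix.diagonal ![I₁, I₂, I₃] + D • (1 : Matrix (Fin 3) (Fin 3) ℝ)) *ᵥ ω t
        - (D * (ω t ⬝ᵥ γ t)) • γ t)
    (heqG : ∀ t, HasDerivAt G (G t ⨯₃ ω t) t)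
    (heqγ : ∀ t, HasDerivAt γ (ε • (γ t ⨯₃ ω t)) t) :
    ∀ t₁ t₂ : ℝ,
      (I₂ + I₃ - I₁ + D) * G t₁ 0 * γ t₁ 0 + (I₃ + I₁ - I₂ + D) * G t₁ 1 * γ t₁ 1
        + (I₁ + I₂ - I₃ + D) * G t₁ 2 * γ t₁ 2
      = (I₂ + I₃ - I₁ + D) * G t₂ 0 * γ t₂ 0 + (I₃ + I₁ - I₂ + D) * G t₂ 1 * γ t₂ 1
        + (I₁ + I₂ - I₃ + D) * G t₂ 2 * γ t₂ 2 :=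
  chaplygin_ball_borisov_fedorov_integral_general I₁ I₂ I₃ D ε hε ω γ G hG heqG heqγ
end

section
/- Along any solution of Demchenko's system, the gyroscopic integral A·n(t) + kμ·cos(u(t)) and the kinetic energy integral P·(s(t)² + τ(t)²) + A·n(t)² are constant in t. -/
open Real

/-- Along any solution of Demchenko's system for a gyroscopic ball rolling without
sliding over a sphere, the gyroscopic integral `A n + kμ cos u` and the kinetic energy
integral `P(s² + τ²) + A n²` are constant. -/
theorem demchenko_gyroscopic_and_energy_integrals
    (A P k μ : ℝ) (hA : 0 < A) (hP : A < P) (hk : k ≠ 0) (hμ : 1 < μ)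
    (u v n s τ : ℝ → ℝ)
    (hu : Differentiable ℝ u) (hv : Differentiable ℝ v) (hn : Differentiable ℝ n)
    (hs : ∀ t, s t = μ * Real.sin (u t) * deriv v t)
    (hτ : ∀ t, τ t = -μ * deriv u t)
    (hsd : Differentiable ℝ s) (hτd : Differentiable ℝ τ)
    (heq1 : ∀ t, P * deriv s t - (μ - 1) * A * n t * deriv u t
        - P * τ t * (n t + Real.cos (u t) * deriv v t)
      = k * μ * Real.cos (u t) * deriv u t)
    (heq2 : ∀ t, P * deriv τ t - (μ - 1) * A * n t * Real.sin (u t) * deriv v t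
        + P * s t * (n t + Real.cos (u t) * deriv v t)
      = k * (n t * Real.sin (u t) + μ * Real.sin (u t) * Real.cos (u t) * deriv v t))
    (heq3 : ∀ t, A * deriv n t = k * μ * Real.sin (u t) * deriv u t) :
    ∀ t₁ t₂ : ℝ,
      A * n t₁ + k * μ * Real.cos (u t₁) = A * n t₂ + k * μ * Real.cos (u t₂) ∧
      P * (s t₁ ^ 2 + τ t₁ ^ 2) + A * n t₁ ^ 2
        = P * (s t₂ ^ 2 + τ t₂ ^ 2) + A * n t₂ ^ 2 := by
  intro t₁ t₂
  constructor
  · -- gyroscopic integral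
    have hF : ∀ t, HasDerivAt (fun t => A * n t + k * μ * Real.cos (u t))
        (A * deriv n t + k * μ * (-Real.sin (u t) * deriv u t)) t := by
      intro t
      exact ((hn t).hasDerivAt.const_mul A).add
        ((((hu t).hasDerivAt).cos).const_mul (k * μ))
    have hF0 : ∀ t, deriv (fun t => A * n t + k * μ * Real.cos (u t)) t = 0 := by
      intro t
      rw [(hF t).deriv]
      have := heq3 t
      linarith [heq3 t]
    have hdiff : Differentiable ℝ (fun t => A * n t + k * μ * Real.cos (u t)) :=
      fun t => (hF t).differentiableAt
    exact is_const_of_deriv_eq_zero hdiff hF0 t₁ t₂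
  · -- energy integral
    have hF : ∀ t, HasDerivAt (fun t => P * (s t ^ 2 + τ t ^ 2) + A * n t ^ 2)
        (P * ((2 : ℕ) * s t ^ 1 * deriv s t + (2 : ℕ) * τ t ^ 1 * deriv τ t)
          + A * ((2 : ℕ) * n t ^ 1 * deriv n t)) t := by
      intro t
      exact ((((hsd t).hasDerivAt.pow 2).add ((hτd t).hasDerivAt.pow 2)).const_mul P).add
        (((hn t).hasDerivAt.pow 2).const_mul A)
    have hF0 : ∀ t, deriv (fun t => P * (s t ^ 2 + τ t ^ 2) + A * n t ^ 2) t = 0 := by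
      intro t
      rw [(hF t).deriv]
      have e1 := heq1 t
      have e2 := heq2 t
      have e3 := heq3 t
      have h1 := hs t
      have h2 := hτ t
      rw [h2] at e1
      rw [h1] at e2
      rw [h1, h2]
      push_cast
      linear_combination 2 * (μ * Real.sin (u t) * deriv v t) * e1
        + 2 * (-μ * deriv u t) * e2 + 2 * n t * e3
    have hdiff : Differentiable ℝ (fun t => P * (s t ^ 2 + τ t ^ 2) + A * n t ^ 2) :=
      fun t => (hF t).differentiableAt
    exact is_const_of_deriv_eq_zero hdiff hF0 t₁ t₂
end

section
/- Along any solution of Demchenko's system, the area integral P²·(s(t)² + τ(t)²) + A²·n(t)² + k² − 2k·(P·s(t)·sin(u(t)) − A·n(t)·cos(u(t))) is constant in t (it equals Γ², the squared magnitude of the total angular momentum of the gyroscopic ball with respect to the contact point). -/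
/-!
The area integral is `|Γ|²` for `Γ = (P s − k sin u, P τ, A n + k cos u)` (expand and use
`sin² u + cos² u = 1`). Demchenko's equations say exactly that `Γ' = Γ × Ω` with
`Ω = ((μ − 1) sin u · v', −(μ − 1) u', n + cos u · v')`, so `Γ'` is orthogonal to `Γ` and
`|Γ|` is conserved.
-/

open Real Matrix

theorem dotProduct_self_eq_of_hasDerivAt_cross {Γ Ω : ℝ → Fin 3 → ℝ}
    (hΓ : ∀ t, HasDerivAt Γ (Γ t ⨯₃ Ω t) t) (t₁ t₂ : ℝ) :
    Γ t₁ ⬝ᵥ Γ t₁ = Γ t₂ ⬝ᵥ Γ t₂ := by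
  have hderiv : ∀ t, HasDerivAt (fun t => Γ t ⬝ᵥ Γ t) 0 t := fun t => by
    have hsum := HasDerivAt.fun_sum (u := Finset.univ) fun i _ =>
      (hasDerivAt_pi.1 (hΓ t) i).mul (hasDerivAt_pi.1 (hΓ t) i)
    refine hsum.congr_deriv ?_
    simp only [mul_comm ((Γ t ⨯₃ Ω t) _), ← two_mul, ← Finset.mul_sum]
    rw [← dotProduct, dot_self_cross, mul_zero]
  exact is_const_of_deriv_eq_zero (fun t => (hderiv t).differentiableAt)
    (fun t => (hderiv t).deriv) t₁ t₂

noncomputable def demchenkoMomentum (A P k s τ n u : ℝ) : Fin 3 → ℝ :=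
  ![P * s - k * sin u, P * τ, A * n + k * cos u]

noncomputable def demchenkoRotation (μ n u u' v' : ℝ) : Fin 3 → ℝ :=
  ![(μ - 1) * sin u * v', -((μ - 1) * u'), n + cos u * v']

theorem demchenkoMomentum_dotProduct_self (A P k s τ n u : ℝ) :
    demchenkoMomentum A P k s τ n u ⬝ᵥ demchenkoMomentum A P k s τ n u
      = P ^ 2 * (s ^ 2 + τ ^ 2) + A ^ 2 * n ^ 2 + k ^ 2
          - 2 * k * (P * s * sin u - A * n * cos u) := by
  simp only [demchenkoMomentum, dotProduct, Fin.sum_univ_three, cons_val]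
  linear_combination k ^ 2 * sin_sq_add_cos_sq u

theorem hasDerivAt_demchenkoMomentum (A P k : ℝ) {s τ n u : ℝ → ℝ} {s' τ' n' u' t : ℝ}
    (hs : HasDerivAt s s' t) (hτ : HasDerivAt τ τ' t) (hn : HasDerivAt n n' t)
    (hu : HasDerivAt u u' t) :
    HasDerivAt (fun t => demchenkoMomentum A P k (s t) (τ t) (n t) (u t))
      ![P * s' - k * cos (u t) * u', P * τ', A * n' - k * sin (u t) * u'] t := by
  refine hasDerivAt_pi.2 fun i => ?_
  fin_cases i
  · exact ((hs.const_mul P).fun_sub (hu.sin.const_mul k)).congr_deriv (by dsimp; ring)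
  · exact hτ.const_mul P
  · exact ((hn.const_mul A).fun_add (hu.cos.const_mul k)).congr_deriv (by dsimp; ring)

theorem demchenkoMomentum_deriv_eq_cross {A P k μ s τ n u s' τ' n' u' v' : ℝ}
    (hs : s = μ * sin u * v') (hτ : τ = -μ * u')
    (heq1 : P * s' - (μ - 1) * A * n * u' - P * τ * (n + cos u * v') = k * μ * cos u * u')
    (heq2 : P * τ' - (μ - 1) * A * n * sin u * v' + P * s * (n + cos u * v')
      = k * (n * sin u + μ * sin u * cos u * v'))
    (heq3 : A * n' = k * μ * sin u * u') :
    ![P * s' - k * cos u * u', P * τ', A * n' - k * sin u * u']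
      = demchenkoMomentum A P k s τ n u ⨯₃ demchenkoRotation μ n u u' v' := by
  ext i
  fin_cases i <;> simp only [cross_apply, demchenkoMomentum, demchenkoRotation, Fin.isValue,
    Fin.zero_eta, Fin.mk_one, Fin.reduceFinMk, cons_val, cons_val_zero, cons_val_one]
  · linear_combination heq1
  · linear_combination heq2
  · linear_combination heq3 + (μ - 1) * P * u' * hs + (μ - 1) * P * sin u * v' * hτ

theorem demchenko_area_integral_general
    (A P k μ : ℝ) (u v n s τ : ℝ → ℝ)
    (hu : Differentiable ℝ u) (hn : Differentiable ℝ n)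
    (hs : ∀ t, s t = μ * Real.sin (u t) * deriv v t)
    (hτ : ∀ t, τ t = -μ * deriv u t)
    (hsd : Differentiable ℝ s) (hτd : Differentiable ℝ τ)
    (heq1 : ∀ t, P * deriv s t - (μ - 1) * A * n t * deriv u t
        - P * τ t * (n t + Real.cos (u t) * deriv v t)
      = k * μ * Real.cos (u t) * deriv u t)
    (heq2 : ∀ t, P * deriv τ t - (μ - 1) * A * n t * Real.sin (u t) * deriv v t
        + P * s t * (n t + Real.cos (u t) * deriv v t)
      = k * (n t * Real.sin (u t) + μ * Real.sin (u t) * Real.cos (u t) * deriv v t))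
    (heq3 : ∀ t, A * deriv n t = k * μ * Real.sin (u t) * deriv u t) :
    ∀ t₁ t₂ : ℝ,
      P ^ 2 * (s t₁ ^ 2 + τ t₁ ^ 2) + A ^ 2 * n t₁ ^ 2 + k ^ 2
          - 2 * k * (P * s t₁ * Real.sin (u t₁) - A * n t₁ * Real.cos (u t₁))
        = P ^ 2 * (s t₂ ^ 2 + τ t₂ ^ 2) + A ^ 2 * n t₂ ^ 2 + k ^ 2
          - 2 * k * (P * s t₂ * Real.sin (u t₂) - A * n t₂ * Real.cos (u t₂)) := by
  have hΓ : ∀ t, HasDerivAt (fun t => demchenkoMomentum A P k (s t) (τ t) (n t) (u t))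
      (demchenkoMomentum A P k (s t) (τ t) (n t) (u t)
        ⨯₃ demchenkoRotation μ (n t) (u t) (deriv u t) (deriv v t)) t := fun t => by
    rw [← demchenkoMomentum_deriv_eq_cross (hs t) (hτ t) (heq1 t) (heq2 t) (heq3 t)]
    exact hasDerivAt_demchenkoMomentum A P k (hsd t).hasDerivAt (hτd t).hasDerivAt
      (hn t).hasDerivAt (hu t).hasDerivAt
  intro t₁ t₂
  simpa only [demchenkoMomentum_dotProduct_self] using
    dotProduct_self_eq_of_hasDerivAt_cross hΓ t₁ t₂

/-- Along any solution of Demchenko's system for a gyroscopic ball rolling without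
sliding over a sphere, the area integral
`P²(s² + τ²) + A²n² + k² − 2k(P s sin u − A n cos u)` is constant (it equals `Γ²`, the
squared magnitude of the total angular momentum with respect to the contact point). -/
theorem demchenko_area_integral
    (A P k μ : ℝ) (hA : 0 < A) (hP : A < P) (hk : k ≠ 0) (hμ : 1 < μ)
    (u v n s τ : ℝ → ℝ)
    (hu : Differentiable ℝ u) (hv : Differentiable ℝ v) (hn : Differentiable ℝ n)
    (hs : ∀ t, s t = μ * Real.sin (u t) * deriv v t)
    (hτ : ∀ t, τ t = -μ * deriv u t)
    (hsd : Differentiable ℝ s) (hτd : Differentiable ℝ τ)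
    (heq1 : ∀ t, P * deriv s t - (μ - 1) * A * n t * deriv u t
        - P * τ t * (n t + Real.cos (u t) * deriv v t)
      = k * μ * Real.cos (u t) * deriv u t)
    (heq2 : ∀ t, P * deriv τ t - (μ - 1) * A * n t * Real.sin (u t) * deriv v t
        + P * s t * (n t + Real.cos (u t) * deriv v t)
      = k * (n t * Real.sin (u t) + μ * Real.sin (u t) * Real.cos (u t) * deriv v t))
    (heq3 : ∀ t, A * deriv n t = k * μ * Real.sin (u t) * deriv u t) :
    ∀ t₁ t₂ : ℝ,
      P ^ 2 * (s t₁ ^ 2 + τ t₁ ^ 2) + A ^ 2 * n t₁ ^ 2 + k ^ 2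
          - 2 * k * (P * s t₁ * Real.sin (u t₁) - A * n t₁ * Real.cos (u t₁))
        = P ^ 2 * (s t₂ ^ 2 + τ t₂ ^ 2) + A ^ 2 * n t₂ ^ 2 + k ^ 2
          - 2 * k * (P * s t₂ * Real.sin (u t₂) - A * n t₂ * Real.cos (u t₂)) :=
  demchenko_area_integral_general A P k μ u v n s τ hu hn hs hτ hsd hτd heq1 heq2 heq3
end

section
/- Suppose real numbers s, n, u, x₀, h, Γ satisfy the three integral relations A n + kμ cos(u) = kμ x₀, P(s² + τ²) + A n² = 2h, and P²(s² + τ²) + A²n² + k² − 2k(P s sin(u) − A n cos(u)) = Γ² (for some real τ). Then, with x = cos(u), b₀ = Iμ + 2A, b₁ = Iμ + A, b₂ = 2PA, and Γ̄ = (I k²μ²x₀² + A(Γ² − k²) − 2hPA)/(μ k²), the elimination identity b₂ · s · sin(u) = kμ · (−b₀ x² + 2 b₁ x₀ x − Γ̄) holds. -/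
open Real

/-! Subtracting `P` times the energy integral from the area integral removes `s² + τ²`; the
gyroscopic integral then gives `A n = kμ(x₀ - cos u)`, and what is left is a quadratic in
`cos u` once divided by `k`. -/

theorem area_integral_sub_energy_integral {R : Type*} [CommRing R] {A P k s n c σ h Γ S : R}
    (h_energy : P * S + A * n ^ 2 = 2 * h)
    (h_area : P ^ 2 * S + A ^ 2 * n ^ 2 + k ^ 2 - 2 * k * (P * s * σ - A * n * c) = Γ ^ 2) :
    2 * P * A * k * s * σ
      = -(P - A) * (A * n) ^ 2 + 2 * A * k * c * (A * n) + A * (k ^ 2 - Γ ^ 2) + 2 * h * P * A := by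
  linear_combination A * P * h_energy - A * h_area

theorem demchenko_elimination_identity_general
    (A P k μ s n u x₀ h Γ τ : ℝ)
    (hk : k ≠ 0) (hμ : 1 < μ)
    (h1 : A * n + k * μ * Real.cos u = k * μ * x₀)
    (h2 : P * (s ^ 2 + τ ^ 2) + A * n ^ 2 = 2 * h)
    (h3 : P ^ 2 * (s ^ 2 + τ ^ 2) + A ^ 2 * n ^ 2 + k ^ 2
        - 2 * k * (P * s * Real.sin u - A * n * Real.cos u) = Γ ^ 2) :
    2 * P * A * s * Real.sin u
      = k * μ * (-((P - A) * μ + 2 * A) * Real.cos u ^ 2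
          + 2 * ((P - A) * μ + A) * x₀ * Real.cos u
          - ((P - A) * k ^ 2 * μ ^ 2 * x₀ ^ 2 + A * (Γ ^ 2 - k ^ 2) - 2 * h * P * A)
              / (μ * k ^ 2)) := by
  have hμ0 : μ ≠ 0 := by positivity
  have hAn : A * n = k * μ * (x₀ - Real.cos u) := by linear_combination h1
  have h_tau_free := area_integral_sub_energy_integral h2 h3
  rw [hAn] at h_tau_free
  field_simp
  linear_combination h_tau_free

/-- Elimination of `τ` from the first integrals of Demchenko's system: if the
gyroscopic integral, the kinetic energy integral and the area integral hold, then
`b₂ s sin u = kμ(−b₀ x² + 2b₁ x₀ x − Γ̄)`, where `x = cos u`, `I = P − A`,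
`b₀ = Iμ + 2A`, `b₁ = Iμ + A`, `b₂ = 2PA`, and
`Γ̄ = (I k²μ²x₀² + A(Γ² − k²) − 2hPA)/(μk²)`. -/
theorem demchenko_elimination_identity
    (A P k μ s n u x₀ h Γ τ : ℝ)
    (hA : 0 < A) (hP : A < P) (hk : k ≠ 0) (hμ : 1 < μ)
    (h1 : A * n + k * μ * Real.cos u = k * μ * x₀)
    (h2 : P * (s ^ 2 + τ ^ 2) + A * n ^ 2 = 2 * h)
    (h3 : P ^ 2 * (s ^ 2 + τ ^ 2) + A ^ 2 * n ^ 2 + k ^ 2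
        - 2 * k * (P * s * Real.sin u - A * n * Real.cos u) = Γ ^ 2) :
    2 * P * A * s * Real.sin u
      = k * μ * (-((P - A) * μ + 2 * A) * Real.cos u ^ 2
          + 2 * ((P - A) * μ + A) * x₀ * Real.cos u
          - ((P - A) * k ^ 2 * μ ^ 2 * x₀ ^ 2 + A * (Γ ^ 2 - k ^ 2) - 2 * h * P * A)
              / (μ * k ^ 2)) :=
  demchenko_elimination_identity_general A P k μ s n u x₀ h Γ τ hk hμ h1 h2 h3
end

section
/- Along any solution of Demchenko's system, denote by kμx₀, 2h and Γ² the (constant) values of the integrals A n + kμ cos(u), P(s² + τ²) + A n², and P²(s² + τ²) + A²n² + k² − 2k(P s sin(u) − A n cos(u)), respectively, and set x(t) = cos(u(t)), b₀ = Iμ + 2A, b₁ = Iμ + A, b₂ = 2PA, Γ̄ = (I k²μ²x₀² + A(Γ² − k²) − 2hPA)/(μ k²). Then x satisfies the elliptic differential equation b₂² · x'(t)² = 2 b₂ · (2hA/μ² − k²(x(t) − x₀)²) · (1 − x(t)²) − k² · (b₀ x(t)² − 2 b₁ x₀ x(t) + Γ̄)²; i.e., x'² equals a polynomial of degree four in x,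 so the motion reduces to an elliptic quadrature. -/
open Real

/-- Along any solution of Demchenko's system, with `kμx₀`, `2h`, `Γ²` the constant
values of the gyroscopic, kinetic energy and area integrals, the function
`x = cos ∘ u` satisfies the elliptic differential equation
`b₂² x'² = 2b₂(2hA/μ² − k²(x − x₀)²)(1 − x²) − k²(b₀x² − 2b₁x₀x + Γ̄)²`,
where `I = P − A`, `b₀ = Iμ + 2A`, `b₁ = Iμ + A`, `b₂ = 2PA` and
`Γ̄ = (Ik²μ²x₀² + A(Γ² − k²) − 2hPA)/(μk²)`. -/
theorem demchenko_elliptic_equation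
    (A P k μ : ℝ) (hA : 0 < A) (hP : A < P) (hk : k ≠ 0) (hμ : 1 < μ)
    (u v n s τ : ℝ → ℝ)
    (hu : Differentiable ℝ u) (hv : Differentiable ℝ v) (hn : Differentiable ℝ n)
    (hs : ∀ t, s t = μ * Real.sin (u t) * deriv v t)
    (hτ : ∀ t, τ t = -μ * deriv u t)
    (hsd : Differentiable ℝ s) (hτd : Differentiable ℝ τ)
    (heq1 : ∀ t, P * deriv s t - (μ - 1) * A * n t * deriv u t
        - P * τ t * (n t + Real.cos (u t) * deriv v t)
      = k * μ * Real.cos (u t) * deriv u t)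
    (heq2 : ∀ t, P * deriv τ t - (μ - 1) * A * n t * Real.sin (u t) * deriv v t
        + P * s t * (n t + Real.cos (u t) * deriv v t)
      = k * (n t * Real.sin (u t) + μ * Real.sin (u t) * Real.cos (u t) * deriv v t))
    (heq3 : ∀ t, A * deriv n t = k * μ * Real.sin (u t) * deriv u t)
    (x₀ h Γ : ℝ)
    (hint1 : ∀ t, A * n t + k * μ * Real.cos (u t) = k * μ * x₀)
    (hint2 : ∀ t, P * (s t ^ 2 + τ t ^ 2) + A * n t ^ 2 = 2 * h)
    (hint3 : ∀ t, P ^ 2 * (s t ^ 2 + τ t ^ 2) + A ^ 2 * n t ^ 2 + k ^ 2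
        - 2 * k * (P * s t * Real.sin (u t) - A * n t * Real.cos (u t)) = Γ ^ 2) :
    ∀ t : ℝ,
      (2 * P * A) ^ 2 * (deriv (fun r => Real.cos (u r)) t) ^ 2
        = 2 * (2 * P * A)
            * (2 * h * A / μ ^ 2 - k ^ 2 * (Real.cos (u t) - x₀) ^ 2)
            * (1 - Real.cos (u t) ^ 2)
          - k ^ 2 * (((P - A) * μ + 2 * A) * Real.cos (u t) ^ 2
              - 2 * ((P - A) * μ + A) * x₀ * Real.cos (u t)
              + ((P - A) * k ^ 2 * μ ^ 2 * x₀ ^ 2 + A * (Γ ^ 2 - k ^ 2)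
                  - 2 * h * P * A) / (μ * k ^ 2)) ^ 2 := by
  intro t
  have hμ0 : μ ≠ 0 := by positivity
  have hd : deriv (fun r => Real.cos (u r)) t = Real.sin (u t) * τ t / μ := by
    have h1 : HasDerivAt (fun r => Real.cos (u r)) (-Real.sin (u t) * deriv u t) t :=
      ((hu t).hasDerivAt).cos
    rw [h1.deriv]
    field_simp
    linear_combination (-Real.sin (u t)) * hτ t
  have hs2 : Real.sin (u t) ^ 2 = 1 - Real.cos (u t) ^ 2 := Real.sin_sq (u t)
  have hQ : 2 * k * P * s t * Real.sin (u t)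
      = 2 * h * P - Γ ^ 2 + k ^ 2 - (P - A) * A * n t ^ 2
        + 2 * k * A * n t * Real.cos (u t) := by
    linear_combination P * hint2 t - hint3 t
  have key : 4 * k ^ 2 * P ^ 2 * (Real.sin (u t) * τ t) ^ 2
      = 4 * k ^ 2 * P * (2 * h - A * n t ^ 2) * (1 - Real.cos (u t) ^ 2)
        - (2 * h * P - Γ ^ 2 + k ^ 2 - (P - A) * A * n t ^ 2
            + 2 * k * A * n t * Real.cos (u t)) ^ 2 := by
    linear_combination (4 * k ^ 2 * P * Real.sin (u t) ^ 2) * hint2 t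
      + (4 * k ^ 2 * P * (2 * h - A * n t ^ 2)) * hs2
      - (2 * h * P - Γ ^ 2 + k ^ 2 - (P - A) * A * n t ^ 2
          + 2 * k * A * n t * Real.cos (u t) + 2 * k * P * s t * Real.sin (u t)) * hQ
  have FG : k ^ 4 * (2 * P * A) ^ 2 * (Real.sin (u t) * τ t) ^ 2
      = 2 * (2 * P * A)
          * (2 * h * A * k ^ 4 - μ ^ 2 * k ^ 6 * (Real.cos (u t) - x₀) ^ 2)
          * (1 - Real.cos (u t) ^ 2)
        - k ^ 2 * (μ * k ^ 2 * (((P - A) * μ + 2 * A) * Real.cos (u t) ^ 2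
              - 2 * ((P - A) * μ + A) * x₀ * Real.cos (u t))
            + ((P - A) * k ^ 2 * μ ^ 2 * x₀ ^ 2 + A * (Γ ^ 2 - k ^ 2)
                - 2 * h * P * A)) ^ 2 := by
    linear_combination (A ^ 2 * k ^ 2) * key + ((1)*P^2*k^5*μ^3*(Real.cos (u t))^3 + (-3)*P^2*k^5*μ^3*x₀*(Real.cos (u t))^2 + (3)*P^2*k^5*μ^3*x₀^2*(Real.cos (u t)) + (-1)*P^2*k^5*μ^3*x₀^3 + (2)*A*P*k^3*μ*(Γ^2)*(Real.cos (u t)) + (-2)*A*P*k^3*μ*x₀*(Γ^2) + (2)*A*P*k^5*μ*(Real.cos (u t)) + (-4)*A*P*k^5*μ*(Real.cos (u t))^3 + (-2)*A*P*k^5*μ*x₀ + (4)*A*P*k^5*μ*x₀*(Real.cos (u t))^2 + (4)*A*P*k^5*μ^2*(Real.cos (u t))^3 + (-8)*A*P*k^5*μ^2*x₀*(Real.cos (u t))^2 + (4)*A*P*k^5*μ^2*x₀^2*(Real.cos (u t)) + (-2)*A*P*k^5*μ^3*(Real.cos (u t))^3 + (6)*A*P*k^5*μ^3*x₀*(Real.cos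 (u t))^2 + (-6)*A*P*k^5*μ^3*x₀^2*(Real.cos (u t)) + (2)*A*P*k^5*μ^3*x₀^3 + (-4)*A*P^2*k^3*μ*h*(Real.cos (u t)) + (4)*A*P^2*k^3*μ*x₀*h + (-1)*A*P^2*k^4*μ^2*(Real.cos (u t))^2*(n t) + (2)*A*P^2*k^4*μ^2*x₀*(Real.cos (u t))*(n t) + (-1)*A*P^2*k^4*μ^2*x₀^2*(n t) + (4)*A^2*k^3*(Γ^2)*(Real.cos (u t)) + (-2)*A^2*k^3*μ*(Γ^2)*(Real.cos (u t)) + (2)*A^2*k^3*μ*x₀*(Γ^2) + (-4)*A^2*k^5*(Real.cos (u t)) + (2)*A^2*k^5*μ*(Real.cos (u t)) + (4)*A^2*k^5*μ*(Real.cos (u t))^3 + (-2)*A^2*k^5*μ*x₀ + (-4)*A^2*k^5*μ*x₀*(Real.cos (u t))^2 + (-4)*A^2*k^5*μ^2*(Real.cos (u t))^3 + (8)*A^2*k^5*μ^2*x₀*(Real.cos (u t))^2 + (-4)*A^2*k^5*μ^2*x₀^2*(Real.cos (u t)) + (1)*A^2*k^5*μ^3*(Real.cos (u t))^3 + (-3)*A^2*k^5*μ^3*x₀*(Real.cos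 (u t))^2 + (3)*A^2*k^5*μ^3*x₀^2*(Real.cos (u t)) + (-1)*A^2*k^5*μ^3*x₀^3 + (-2)*A^2*P*k^2*(Γ^2)*(n t) + (-8)*A^2*P*k^3*h*(Real.cos (u t)) + (4)*A^2*P*k^3*μ*h*(Real.cos (u t)) + (-4)*A^2*P*k^3*μ*x₀*h + (-2)*A^2*P*k^4*(n t) + (4)*A^2*P*k^4*(Real.cos (u t))^2*(n t) + (-4)*A^2*P*k^4*μ*(Real.cos (u t))^2*(n t) + (4)*A^2*P*k^4*μ*x₀*(Real.cos (u t))*(n t) + (2)*A^2*P*k^4*μ^2*(Real.cos (u t))^2*(n t) + (-4)*A^2*P*k^4*μ^2*x₀*(Real.cos (u t))*(n t) + (2)*A^2*P*k^4*μ^2*x₀^2*(n t) + (4)*A^2*P^2*k^2*h*(n t) + (1)*A^2*P^2*k^3*μ*(Real.cos (u t))*(n t)^2 + (-1)*A^2*P^2*k^3*μ*x₀*(n t)^2 + (2)*A^3*k^2*(Γ^2)*(n t) + (-2)*A^3*k^4*(n t) + (-4)*A^3*k^4*(Real.cos (u t))^2*(n t) + (4)*A^3*k^4*μ*(Real.cos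 (u t))^2*(n t) + (-4)*A^3*k^4*μ*x₀*(Real.cos (u t))*(n t) + (-1)*A^3*k^4*μ^2*(Real.cos (u t))^2*(n t) + (2)*A^3*k^4*μ^2*x₀*(Real.cos (u t))*(n t) + (-1)*A^3*k^4*μ^2*x₀^2*(n t) + (-4)*A^3*P*k^2*h*(n t) + (4)*A^3*P*k^3*(Real.cos (u t))*(n t)^2 + (-2)*A^3*P*k^3*μ*(Real.cos (u t))*(n t)^2 + (2)*A^3*P*k^3*μ*x₀*(n t)^2 + (-1)*A^3*P^2*k^2*(n t)^3 + (-4)*A^4*k^3*(Real.cos (u t))*(n t)^2 + (1)*A^4*k^3*μ*(Real.cos (u t))*(n t)^2 + (-1)*A^4*k^3*μ*x₀*(n t)^2 + (2)*A^4*P*k^2*(n t)^3 + (-1)*A^5*k^2*(n t)^3) * hint1 t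
  rw [hd]
  have hne : μ ^ 2 * k ^ 4 ≠ 0 := by positivity
  apply mul_left_cancel₀ hne
  calc μ ^ 2 * k ^ 4 * ((2 * P * A) ^ 2 * (Real.sin (u t) * τ t / μ) ^ 2)
      = k ^ 4 * (2 * P * A) ^ 2 * (Real.sin (u t) * τ t) ^ 2 := by
        field_simp
    _ = 2 * (2 * P * A)
          * (2 * h * A * k ^ 4 - μ ^ 2 * k ^ 6 * (Real.cos (u t) - x₀) ^ 2)
          * (1 - Real.cos (u t) ^ 2)
        - k ^ 2 * (μ * k ^ 2 * (((P - A) * μ + 2 * A) * Real.cos (u t) ^ 2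
              - 2 * ((P - A) * μ + A) * x₀ * Real.cos (u t))
            + ((P - A) * k ^ 2 * μ ^ 2 * x₀ ^ 2 + A * (Γ ^ 2 - k ^ 2)
                - 2 * h * P * A)) ^ 2 := FG
    _ = μ ^ 2 * k ^ 4 * (2 * (2 * P * A)
            * (2 * h * A / μ ^ 2 - k ^ 2 * (Real.cos (u t) - x₀) ^ 2)
            * (1 - Real.cos (u t) ^ 2)
          - k ^ 2 * (((P - A) * μ + 2 * A) * Real.cos (u t) ^ 2
              - 2 * ((P - A) * μ + A) * x₀ * Real.cos (u t)
              + ((P - A) * k ^ 2 * μ ^ 2 * x₀ ^ 2 + A * (Γ ^ 2 - k ^ 2)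
                  - 2 * h * P * A) / (μ * k ^ 2)) ^ 2) := by
        field_simp
end

section
/- Let X : ℝ → ℝ be twice continuously differentiable with X(x₀) = 0, X′(x₀) = 0 and X″(x₀) > 0. Then the equilibrium x₀ of the second-order equation x″ = ½ X′(x) is unstable: there exists ε > 0 such that for every δ > 0 there is a solution with |x(0) − x₀| < δ and |x′(0)| < δ whose trajectory reaches some time t > 0 (within its interval of existence) with |x(t) − x₀| ≥ ε. -/
open Set Filter

/-!
Since `X(x₀) = X′(x₀) = 0 < X″(x₀)`, `x₀` is a local minimum of `X`, so `X ≥ 0` on some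
`[x₀, x₀ + r]`. On the energy level `x′² = X(x) + (δ/2)²` the solution of `x′ = √(X(x) + (δ/2)²)`
through `x₀`, obtained by quadrature, starts with velocity `δ/2` and keeps speed at least `δ/2`
while in `[x₀, x₀ + r]`, so it reaches `x₀ + r`; differentiating
`v = √(X(x) + (δ/2)²)` gives back `v′ = X′(x)/2`.
-/

theorem surjective_of_forall_hasDerivAt_ge {F F' : ℝ → ℝ} {m : ℝ}
    (hF : ∀ y, HasDerivAt F (F' y) y) (hm : 0 < m) (hF' : ∀ y, m ≤ F' y) :
    Function.Surjective F := by
  have hdiff : Differentiable ℝ F := fun y => (hF y).differentiableAt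
  have hgrowth : ∀ ⦃y z⦄, y ≤ z → m * (z - y) ≤ F z - F y :=
    mul_sub_le_image_sub_of_le_deriv hdiff fun y => (hF y).deriv ▸ hF' y
  refine hdiff.continuous.surjective ?_ ?_
  · refine tendsto_atTop_mono' _ ?_
      (tendsto_atTop_add_const_left _ (F 0) (tendsto_id.const_mul_atTop hm))
    filter_upwards [eventually_ge_atTop 0] with y hy
    show F 0 + m * y ≤ F y
    linarith [hgrowth hy]
  · refine tendsto_atBot_mono' _ ?_
      (tendsto_atBot_add_const_left _ (F 0) (tendsto_id.const_mul_atBot hm))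
    filter_upwards [eventually_le_atBot 0] with y hy
    show F y ≤ F 0 + m * y
    linarith [hgrowth hy]

theorem exists_orderIso_hasDerivAt_eq_comp {g : ℝ → ℝ} (hg : Continuous g) {a b : ℝ}
    (hab : a ≤ b) (hpos : ∀ y ∈ Icc a b, 0 < g y) (p : ℝ) :
    ∃ x : ℝ ≃o ℝ, x 0 = p ∧ ∀ t, x t ∈ Icc a b → HasDerivAt x (g (x t)) t := by
  -- Freezing `g` outside `[a, b]` keeps `1 / g` bounded below, so the time map `∫ 1 / g` is
  -- onto `ℝ`, and its inverse is the solution.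
  set k : ℝ → ℝ := fun y => (g (projIcc a b hab y))⁻¹ with hk
  have hk_cont : Continuous k :=
    (hg.comp (continuous_subtype_val.comp continuous_projIcc)).inv₀ fun y =>
      (hpos _ (projIcc a b hab y).2).ne'
  obtain ⟨y₀, hy₀, hmin⟩ : ∃ y₀ ∈ Icc a b, IsMinOn k (Icc a b) y₀ :=
    isCompact_Icc.exists_isMinOn (nonempty_Icc.2 hab) hk_cont.continuousOn
  have hk_ge : ∀ y, k y₀ ≤ k y := fun y => by
    simpa [hk, projIcc_val] using hmin (projIcc a b hab y).2
  have hk_pos : 0 < k y₀ := by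
    simpa [hk, projIcc_of_mem hab hy₀] using hpos y₀ hy₀
  set F : ℝ → ℝ := fun y => ∫ s in p..y, k s
  have hF : ∀ y, HasDerivAt F (k y) y := fun y =>
    (hk_cont.integral_hasStrictDerivAt p y).hasDerivAt
  let e := StrictMono.orderIsoOfSurjective F
    (strictMono_of_hasDerivAt_pos hF fun y => hk_pos.trans_le (hk_ge y))
    (surjective_of_forall_hasDerivAt_ge hF hk_pos hk_ge)
  refine ⟨e.symm, e.symm_apply_eq.2 (intervalIntegral.integral_same).symm, fun t ht => ?_⟩
  have hinv := (hF (e.symm t)).of_local_left_inverse e.symm.continuous.continuousAt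
    (hk_pos.trans_le (hk_ge _)).ne' (Eventually.of_forall e.apply_symm_apply)
  simpa [hk, projIcc_of_mem hab ht] using hinv

theorem hasDerivAt_sqrt_comp_of_hasDerivAt_sqrt {E x : ℝ → ℝ} {E' t : ℝ}
    (hx : HasDerivAt x √(E (x t)) t) (hE : HasDerivAt E E' (x t)) (hpos : 0 < E (x t)) :
    HasDerivAt (fun s => √(E (x s))) (E' / 2) t := by
  have h := (hE.comp t hx).sqrt hpos.ne'
  rwa [Function.comp_apply, mul_div_mul_right _ _ (Real.sqrt_pos.2 hpos).ne'] at h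

/-- Instability of a regular precession: if `X` is `C²` with `X(x₀) = X′(x₀) = 0` and
`X″(x₀) > 0`, then the equilibrium `x₀` of `x″ = ½X′(x)` is unstable: there is `ε > 0`
such that arbitrarily close to `(x₀, 0)` there start solutions which reach distance at
least `ε` from `x₀` at some positive time within their interval of existence. -/
theorem regular_precession_unstable
    (X : ℝ → ℝ) (x₀ : ℝ) (hX : ContDiff ℝ 2 X)
    (h0 : X x₀ = 0) (h1 : deriv X x₀ = 0) (h2 : 0 < deriv (deriv X) x₀) :
    ∃ ε > 0, ∀ δ > 0, ∃ (x v : ℝ → ℝ) (T : ℝ), 0 < T ∧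
      (∀ t ∈ Set.Icc (0 : ℝ) T,
        HasDerivAt x (v t) t ∧ HasDerivAt v (deriv X (x t) / 2) t) ∧
      |x 0 - x₀| < δ ∧ |v 0| < δ ∧ ε ≤ |x T - x₀| := by
  have hXdiff : Differentiable ℝ X := hX.differentiable (by norm_num)
  obtain ⟨r, hr, hXnonneg⟩ : ∃ r > 0, ∀ y ∈ Icc x₀ (x₀ + r), 0 ≤ X y := by
    have hmin : IsLocalMin X x₀ :=
      isLocalMin_of_deriv_deriv_pos h2 h1 hXdiff.continuous.continuousAt
    obtain ⟨r, hr, hball⟩ := Metric.eventually_nhds_iff_ball.1 hmin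
    refine ⟨r / 2, by positivity, fun y hy => h0 ▸ hball y ?_⟩
    rw [Real.ball_eq_Ioo]
    constructor <;> linarith [hy.1, hy.2]
  refine ⟨r, hr, fun δ hδ => ?_⟩
  set c := (δ / 2) ^ 2
  have hE : ∀ y ∈ Icc x₀ (x₀ + r), 0 < X y + c := fun y hy => by
    have := hXnonneg y hy
    positivity
  obtain ⟨x, hx0, hx⟩ := exists_orderIso_hasDerivAt_eq_comp (g := fun y => √(X y + c))
    (by fun_prop) (by linarith) (fun y hy => Real.sqrt_pos.2 (hE y hy)) x₀
  set T := x.symm (x₀ + r)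
  have hxT : x T = x₀ + r := x.apply_symm_apply _
  have hT : 0 < T := by
    rw [← x.lt_iff_lt, hx0, hxT]
    linarith
  have hmem : ∀ t ∈ Icc 0 T, x t ∈ Icc x₀ (x₀ + r) := fun t ht =>
    ⟨hx0 ▸ x.monotone ht.1, hxT ▸ x.monotone ht.2⟩
  refine ⟨x, fun t => √(X (x t) + c), T, hT, fun t ht => ?_, ?_, ?_, ?_⟩
  · have hxt := hx t (hmem t ht)
    exact ⟨hxt, hasDerivAt_sqrt_comp_of_hasDerivAt_sqrt hxt
      ((hXdiff _).hasDerivAt.add_const c) (hE _ (hmem t ht))⟩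
  · simpa [hx0] using hδ
  · dsimp only
    rw [hx0, h0, zero_add, Real.sqrt_sq (by positivity), abs_of_pos (by positivity)]
    linarith
  · simp [hxT, abs_of_pos hr]
end

section
/- Let X be a real polynomial of degree four with negative leading coefficient such that X(x₀) = X′(x₀) = X″(x₀) = X‴(x₀) = 0 (so x₀ is a root of multiplicity four). Then every differentiable function x : ℝ → ℝ satisfying x′(t)² = X(x(t)) for all t is constant, equal to x₀; in particular the corresponding regular precession is stable. -/
/-!
A root of multiplicity four of a quartic exhausts its degree, so `X = a₀ (x - x₀)⁴` with
`a₀ < 0`. Then `X ≤ 0` everywhere and vanishes only at `x₀`, while `x′² = X(x)` forces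
`X(x(t)) ≥ 0`; hence `x(t) = x₀` for every `t`.
-/

open Polynomial

theorem Polynomial.eq_C_leadingCoeff_mul_X_sub_C_pow {R : Type*} [CommRing R] [Nontrivial R]
    {p : R[X]} {a : R} {n : ℕ} (hdeg : p.natDegree ≤ n) (hmult : n ≤ p.rootMultiplicity a) :
    p = C p.leadingCoeff * (X - C a) ^ n :=
  eq_leadingCoeff_mul_of_monic_of_dvd_of_natDegree_le ((monic_X_sub_C a).pow n)
    ((pow_dvd_pow _ hmult).trans (pow_rootMultiplicity_dvd p a))
    (by rwa [(monic_X_sub_C a).natDegree_pow, natDegree_X_sub_C, mul_one])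

theorem eq_of_sq_eq_mul_pow_of_neg {a b y x₀ : ℝ} {n : ℕ} (ha : a < 0) (hn : Even n)
    (h : b ^ 2 = a * (y - x₀) ^ n) : y = x₀ := by
  have hnonpos : a * (y - x₀) ^ n ≤ 0 := mul_nonpos_of_nonpos_of_nonneg ha.le (hn.pow_nonneg _)
  have hzero : a * (y - x₀) ^ n = 0 := le_antisymm hnonpos (h ▸ sq_nonneg b)
  have hpow : (y - x₀) ^ n = 0 := (mul_eq_zero.1 hzero).resolve_left ha.ne
  exact sub_eq_zero.1 (eq_zero_of_pow_eq_zero hpow)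

/-- Degenerate stable case of Demchenko's analysis: if `X` is a real polynomial of
degree four with negative leading coefficient having `x₀` as a root of multiplicity
four (i.e. `X(x₀) = X′(x₀) = X″(x₀) = X‴(x₀) = 0`), then every differentiable
solution of `x′² = X(x)` is constant, equal to `x₀`; in particular the corresponding
regular precession is stable. -/
theorem regular_precession_degenerate_stable
    (X : Polynomial ℝ) (x₀ : ℝ)
    (hdeg : X.natDegree = 4) (hlead : X.leadingCoeff < 0)
    (h0 : X.eval x₀ = 0)
    (h1 : (Polynomial.derivative X).eval x₀ = 0)
    (h2 : (Polynomial.derivative (Polynomial.derivative X)).eval x₀ = 0)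
    (h3 : (Polynomial.derivative (Polynomial.derivative
        (Polynomial.derivative X))).eval x₀ = 0) :
    ∀ x : ℝ → ℝ, Differentiable ℝ x →
      (∀ t, (deriv x t) ^ 2 = X.eval (x t)) → ∀ t, x t = x₀ := by
  intro x _ hode t
  have hX : X ≠ 0 := by rintro rfl; simp at hlead
  have hmult : 3 < X.rootMultiplicity x₀ := by
    refine lt_rootMultiplicity_of_isRoot_iterate_derivative hX fun m hm => ?_
    interval_cases m
    exacts [h0, h1, h2, h3]
  have hfactor := congrArg (eval (x t)) (eq_C_leadingCoeff_mul_X_sub_C_pow hdeg.le hmult)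
  simp only [eval_mul, eval_C, eval_pow, eval_sub, eval_X] at hfactor
  exact eq_of_sq_eq_mul_pow_of_neg hlead (by decide) ((hode t).trans hfactor)
end

section
/- Let X : ℝ → ℝ be three times continuously differentiable with X(x₀) = X′(x₀) = X″(x₀) = 0 and X‴(x₀) ≠ 0. Then the equilibrium x₀ of the second-order equation x″ = ½ X′(x) is unstable: there exists ε > 0 such that for every δ > 0 there is a solution with |x(0) − x₀| < δ and |x′(0)| < δ whose trajectory reaches some time t > 0 (within its interval of existence) with |x(t) − x₀| ≥ ε. -/
/-!
If `X'''(x₀) > 0` then `X'` is convex near `x₀` with minimum `X'(x₀) = 0`, so `X` is nondecreasing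
on some `[x₀ - r, x₀ + r]` (for `X'''(x₀) < 0` reflect `x ↦ -x`). Along a solution of
`x'' = ½X'(x)` the energy `x'² - X(x)` is conserved, so the solution starting at `x₀ + η` with
velocity `v₀ > 0` keeps velocity `≥ v₀` while it stays in `[x₀ + η, x₀ + r]`, and hence reaches
`x₀ + r` however small `η` and `v₀` are. It is built by quadrature, inverting
`z ↦ ∫ dz / √(v₀² + X z - X (x₀ + η))`.
-/

open Set Filter

/-- `x` is the inverse of `z ↦ ∫_a^z 1/g`, which is onto `ℝ` because `1/g ≥ 1/M`. -/
theorem exists_strictMono_surjective_hasDerivAt_comp {g : ℝ → ℝ} {M : ℝ} (hg : Continuous g)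
    (hpos : ∀ z, 0 < g z) (hM : ∀ z, g z ≤ M) (a : ℝ) :
    ∃ x : ℝ → ℝ, x 0 = a ∧ StrictMono x ∧ Function.Surjective x ∧
      ∀ t, HasDerivAt x (g (x t)) t := by
  set τ : ℝ → ℝ := fun z => ∫ u in a..z, (g u)⁻¹
  have hτ : ∀ z, HasDerivAt τ (g z)⁻¹ z := fun z =>
    ((hg.inv₀ fun u => (hpos u).ne').integral_hasStrictDerivAt a z).hasDerivAt
  have hτ_mono : StrictMono τ := strictMono_of_hasDerivAt_pos hτ fun z => inv_pos.2 (hpos z)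
  have hM₀ : 0 < M := (hpos 0).trans_le (hM 0)
  have hτ_sub : Monotone fun z => τ z - z / M := by
    have hd : ∀ z, HasDerivAt (fun z => τ z - z / M) ((g z)⁻¹ - 1 / M) z := fun z =>
      (hτ z).sub ((hasDerivAt_id' z).div_const M)
    refine monotone_of_deriv_nonneg (fun z => (hd z).differentiableAt) fun z => ?_
    rw [(hd z).deriv, sub_nonneg, one_div]
    exact inv_anti₀ (hpos z) (hM z)
  have hτ_surj : Function.Surjective τ := by
    have hlin : Tendsto (fun z : ℝ => z / M + τ 0) atTop atTop :=
      tendsto_atTop_add_const_right _ _ (tendsto_id.atTop_div_const hM₀)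
    have hlin' : Tendsto (fun z : ℝ => z / M + τ 0) atBot atBot :=
      tendsto_atBot_add_const_right _ _ (tendsto_id.atBot_div_const hM₀)
    refine Continuous.surjective (continuous_iff_continuousAt.2 fun z => (hτ z).continuousAt)
      (tendsto_atTop_mono' _ ?_ hlin) (tendsto_atBot_mono' _ ?_ hlin')
    · filter_upwards [eventually_ge_atTop 0] with z hz
      linarith [show τ 0 ≤ τ z - z / M by simpa using hτ_sub hz]
    · filter_upwards [eventually_le_atBot 0] with z hz
      linarith [show τ z - z / M ≤ τ 0 by simpa using hτ_sub hz]
  set e := hτ_mono.orderIsoOfSurjective τ hτ_surj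
  refine ⟨e.symm, ?_, e.symm.strictMono, e.symm.surjective, fun t => ?_⟩
  · simpa [τ] using hτ_mono.orderIsoOfSurjective_symm_apply_self τ hτ_surj a
  · simpa using (hτ (e.symm t)).of_local_left_inverse e.symm.continuous.continuousAt
      (inv_ne_zero (hpos _).ne') (Eventually.of_forall e.apply_symm_apply)

theorem exists_hasDerivAt_comp_of_pos_on_Icc {g : ℝ → ℝ} {a b : ℝ} (hab : a < b)
    (hg : ContinuousOn g (Icc a b)) (hpos : ∀ z ∈ Icc a b, 0 < g z) :
    ∃ (x : ℝ → ℝ) (T : ℝ), 0 < T ∧ x 0 = a ∧ x T = b ∧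
      ∀ t ∈ Icc 0 T, x t ∈ Icc a b ∧ HasDerivAt x (g (x t)) t := by
  set p : ℝ → ℝ := fun z => projIcc a b hab.le z
  have hp : ∀ z ∈ Icc a b, p z = z := fun z hz => by simp [p, projIcc_of_mem hab.le hz]
  obtain ⟨M, hM⟩ := isCompact_Icc.exists_bound_of_continuousOn hg
  obtain ⟨x, hx0, hx_mono, hx_surj, hx⟩ := exists_strictMono_surjective_hasDerivAt_comp
    (g := g ∘ p) (M := M) (hg.comp_continuous (continuous_subtype_val.comp continuous_projIcc)
      fun z => Subtype.mem _) (fun z => hpos _ (Subtype.mem _))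
    (fun z => (le_abs_self _).trans (hM _ (Subtype.mem _))) a
  obtain ⟨T, hxT⟩ := hx_surj b
  have hT : 0 < T := hx_mono.lt_iff_lt.1 (by rwa [hx0, hxT])
  refine ⟨x, T, hT, hx0, hxT, fun t ht => ?_⟩
  have hxt : x t ∈ Icc a b := ⟨hx0 ▸ hx_mono.monotone ht.1, hxT ▸ hx_mono.monotone ht.2⟩
  exact ⟨hxt, by simpa [Function.comp, hp _ hxt] using hx t⟩

def IsSolutionOn (X x v : ℝ → ℝ) (T : ℝ) : Prop :=
  ∀ t ∈ Icc 0 T, HasDerivAt x (v t) t ∧ HasDerivAt v (deriv X (x t) / 2) t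

/-- The solution has velocity `v = √(v₀² + X x - X a)`, which stays `≥ v₀` on `[a, b]`. -/
theorem exists_isSolutionOn_of_monotoneOn {X : ℝ → ℝ} {a b v₀ : ℝ} (hX : Differentiable ℝ X)
    (hab : a < b) (hmono : MonotoneOn X (Icc a b)) (hv₀ : 0 < v₀) :
    ∃ (x v : ℝ → ℝ) (T : ℝ), 0 < T ∧ IsSolutionOn X x v T ∧ x 0 = a ∧ v 0 = v₀ ∧ x T = b := by
  set W : ℝ → ℝ := fun z => v₀ ^ 2 + X z - X a
  have hW : ∀ z ∈ Icc a b, 0 < W z := fun z hz => by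
    have := hmono (left_mem_Icc.2 hab.le) hz hz.1
    simp only [W]; nlinarith
  have hWc : Continuous W := by have := hX.continuous; fun_prop
  obtain ⟨x, T, hT, hx0, hxT, hx⟩ := exists_hasDerivAt_comp_of_pos_on_Icc hab
    (g := fun z => √(W z)) (by fun_prop) fun z hz => Real.sqrt_pos.2 (hW z hz)
  refine ⟨x, fun t => √(W (x t)), T, hT, fun t ht => ⟨(hx t ht).2, ?_⟩, hx0, ?_, hxT⟩
  · obtain ⟨hxt, hx'⟩ := hx t ht
    have hWx : HasDerivAt (fun s => W (x s)) (deriv X (x t) * √(W (x t))) t :=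
      (((hX (x t)).hasDerivAt.const_add _).sub_const _).comp t hx'
    convert hWx.sqrt (hW _ hxt).ne' using 1
    field_simp [(Real.sqrt_pos.2 (hW _ hxt)).ne']
  · simp [W, hx0, hv₀.le]

def IsUnstableEquilibrium (X : ℝ → ℝ) (x₀ : ℝ) : Prop :=
  ∃ ε > 0, ∀ δ > 0, ∃ (x v : ℝ → ℝ) (T : ℝ), 0 < T ∧ IsSolutionOn X x v T ∧
    |x 0 - x₀| < δ ∧ |v 0| < δ ∧ ε ≤ |x T - x₀|

theorem isUnstableEquilibrium_of_monotoneOn {X : ℝ → ℝ} {x₀ r : ℝ} (hX : Differentiable ℝ X)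
    (hr : 0 < r) (hmono : MonotoneOn X (Icc x₀ (x₀ + r))) : IsUnstableEquilibrium X x₀ := by
  refine ⟨r, hr, fun δ hδ => ?_⟩
  obtain ⟨η, hη, hηδ, hηr⟩ : ∃ η, 0 < η ∧ η < δ ∧ η < r :=
    ⟨min δ r / 2, by positivity, by linarith [min_le_left δ r], by linarith [min_le_right δ r]⟩
  obtain ⟨x, v, T, hT, hsol, hx0, hv0, hxT⟩ := exists_isSolutionOn_of_monotoneOn hX
    (by linarith : x₀ + η < x₀ + r) (hmono.mono (Icc_subset_Icc_left (by linarith)))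
    (half_pos hδ)
  refine ⟨x, v, T, hT, hsol, ?_, ?_, ?_⟩
  · rwa [hx0, add_sub_cancel_left, abs_of_pos hη]
  · rw [hv0, abs_of_pos (half_pos hδ)]; linarith
  · rw [hxT, add_sub_cancel_left, abs_of_pos hr]

theorem IsUnstableEquilibrium.of_comp_neg {X : ℝ → ℝ} {x₀ : ℝ}
    (h : IsUnstableEquilibrium (fun y => X (-y)) (-x₀)) : IsUnstableEquilibrium X x₀ := by
  obtain ⟨ε, hε, h⟩ := h
  refine ⟨ε, hε, fun δ hδ => ?_⟩
  obtain ⟨y, w, T, hT, hsol, hy0, hw0, hyT⟩ := h δ hδ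
  refine ⟨fun t => -y t, fun t => -w t, T, hT, fun t ht => ?_, ?_, by simpa [abs_neg] using hw0, ?_⟩
  · obtain ⟨hy, hw⟩ := hsol t ht
    refine ⟨hy.neg, ?_⟩
    have hw' := hw.neg
    rw [deriv_comp_neg, neg_div, neg_neg] at hw'
    exact hw'
  · rw [← abs_neg]; convert hy0 using 2; ring
  · rw [← abs_neg]; convert hyT using 2; ring

theorem isUnstableEquilibrium_of_antitoneOn {X : ℝ → ℝ} {x₀ r : ℝ} (hX : Differentiable ℝ X)
    (hr : 0 < r) (hanti : AntitoneOn X (Icc (x₀ - r) x₀)) : IsUnstableEquilibrium X x₀ := by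
  refine .of_comp_neg (isUnstableEquilibrium_of_monotoneOn (hX.comp differentiable_neg) hr ?_)
  intro a ha b hb hab
  exact hanti ⟨by linarith [hb.2], by linarith [hb.1]⟩ ⟨by linarith [ha.2], by linarith [ha.1]⟩
    (neg_le_neg hab)

/-- Near a point where `X' = X'' = 0 < X'''`, the derivative `X'` is convex with minimum `0`. -/
theorem exists_monotoneOn_Icc_of_deriv_three_pos {X : ℝ → ℝ} {x₀ : ℝ} (hX : ContDiff ℝ 3 X)
    (h1 : deriv X x₀ = 0) (h2 : deriv (deriv X) x₀ = 0) (h3 : 0 < deriv (deriv (deriv X)) x₀) :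
    ∃ r > 0, MonotoneOn X (Icc (x₀ - r) (x₀ + r)) := by
  have hX₁ : ContDiff ℝ 2 (deriv X) := hX.deriv'
  have hX₂ : ContDiff ℝ 1 (deriv (deriv X)) := hX₁.deriv'
  have hd₀ : Differentiable ℝ X := hX.differentiable (by norm_num)
  have hd₁ : Differentiable ℝ (deriv X) := hX₁.differentiable (by norm_num)
  have hd₂ : Differentiable ℝ (deriv (deriv X)) := hX₂.differentiable one_ne_zero
  obtain ⟨r, hr, hpos⟩ := (nhds_basis_Icc_pos x₀).eventually_iff.1
    ((hX₂.continuous_deriv le_rfl).continuousAt.eventually (eventually_gt_nhds h3))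
  have hx₀ : x₀ ∈ interior (Icc (x₀ - r) (x₀ + r)) := by
    rw [interior_Icc]; constructor <;> linarith
  have hmono₂ : MonotoneOn (deriv (deriv X)) (Icc (x₀ - r) (x₀ + r)) :=
    monotoneOn_of_deriv_nonneg (convex_Icc _ _) hd₂.continuous.continuousOn hd₂.differentiableOn
      fun y hy => (hpos (interior_subset hy)).le
  have hconv₁ : ConvexOn ℝ (Icc (x₀ - r) (x₀ + r)) (deriv X) :=
    (hmono₂.mono interior_subset).convexOn_of_deriv (convex_Icc _ _) hd₁.continuous.continuousOn
      hd₁.differentiableOn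
  have hmin₁ : IsMinOn (deriv X) (Icc (x₀ - r) (x₀ + r)) x₀ :=
    hconv₁.isMinOn_of_rightDeriv_eq_zero hx₀ <| by
      rw [(hd₁ x₀).hasDerivAt.hasDerivWithinAt.derivWithin (uniqueDiffWithinAt_Ioi x₀), h2]
  exact ⟨r, hr, monotoneOn_of_deriv_nonneg (convex_Icc _ _) hd₀.continuous.continuousOn
    hd₀.differentiableOn fun y hy => h1 ▸ hmin₁ (interior_subset hy)⟩

theorem exists_antitoneOn_Icc_of_deriv_three_neg {X : ℝ → ℝ} {x₀ : ℝ} (hX : ContDiff ℝ 3 X)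
    (h1 : deriv X x₀ = 0) (h2 : deriv (deriv X) x₀ = 0) (h3 : deriv (deriv (deriv X)) x₀ < 0) :
    ∃ r > 0, AntitoneOn X (Icc (x₀ - r) (x₀ + r)) := by
  obtain ⟨r, hr, hmono⟩ := exists_monotoneOn_Icc_of_deriv_three_pos (X := fun y => -X y)
    (x₀ := x₀) hX.neg (by simp [h1]) (by simp [h2]) (by simpa using h3)
  exact ⟨r, hr, fun a ha b hb hab => neg_le_neg_iff.1 (hmono ha hb hab)⟩

theorem regular_precession_degenerate_unstable_general
    (X : ℝ → ℝ) (x₀ : ℝ) (hX : ContDiff ℝ 3 X)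
    (h1 : deriv X x₀ = 0) (h2 : deriv (deriv X) x₀ = 0)
    (h3 : deriv (deriv (deriv X)) x₀ ≠ 0) :
    ∃ ε > 0, ∀ δ > 0, ∃ (x v : ℝ → ℝ) (T : ℝ), 0 < T ∧
      (∀ t ∈ Set.Icc (0 : ℝ) T,
        HasDerivAt x (v t) t ∧ HasDerivAt v (deriv X (x t) / 2) t) ∧
      |x 0 - x₀| < δ ∧ |v 0| < δ ∧ ε ≤ |x T - x₀| := by
  have hd : Differentiable ℝ X := hX.differentiable (by norm_num)
  show IsUnstableEquilibrium X x₀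
  rcases h3.lt_or_gt with hneg | hpos
  · obtain ⟨r, hr, hanti⟩ := exists_antitoneOn_Icc_of_deriv_three_neg hX h1 h2 hneg
    exact isUnstableEquilibrium_of_antitoneOn hd hr
      (hanti.mono (Icc_subset_Icc_right (by linarith)))
  · obtain ⟨r, hr, hmono⟩ := exists_monotoneOn_Icc_of_deriv_three_pos hX h1 h2 hpos
    exact isUnstableEquilibrium_of_monotoneOn hd hr
      (hmono.mono (Icc_subset_Icc_left (by linarith)))

/-- Degenerate unstable case of Demchenko's analysis: if `X` is `C³` with
`X(x₀) = X′(x₀) = X″(x₀) = 0` and `X‴(x₀) ≠ 0`, then the equilibrium `x₀` of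
`x″ = ½X′(x)` is unstable: there is `ε > 0` such that arbitrarily close to `(x₀, 0)`
there start solutions which reach distance at least `ε` from `x₀` at some positive
time within their interval of existence. -/
theorem regular_precession_degenerate_unstable
    (X : ℝ → ℝ) (x₀ : ℝ) (hX : ContDiff ℝ 3 X)
    (h0 : X x₀ = 0) (h1 : deriv X x₀ = 0) (h2 : deriv (deriv X) x₀ = 0)
    (h3 : deriv (deriv (deriv X)) x₀ ≠ 0) :
    ∃ ε > 0, ∀ δ > 0, ∃ (x v : ℝ → ℝ) (T : ℝ), 0 < T ∧
      (∀ t ∈ Set.Icc (0 : ℝ) T,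
        HasDerivAt x (v t) t ∧ HasDerivAt v (deriv X (x t) / 2) t) ∧
      |x 0 - x₀| < δ ∧ |v 0| < δ ∧ ε ≤ |x T - x₀| :=
  regular_precession_degenerate_unstable_general X x₀ hX h1 h2 h3
end
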